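/- For every t ∈ Γ and k ∈ B, the starting values of the late-jobs dynamic program satisfy w(1,t,k) = x(1,t,k). -/
import Mathlib


/-- A PFB instance with `m+1` machines, `n+1` jobs and all release dates `0`.
`Feasible0 p b J c` is feasibility of schedule `c` for the sub-instance `I_J`
containing only the jobs `0,…,J`. -/
def Feasible0 {m n : ℕ} (p b : Fin (m + 1) → ℕ) (J : Fin (n + 1))
    (c : Fin (m + 1) → Fin (n + 1) → ℕ) : Prop :=
  (∀ j ≤ J, p 0 ≤ c 0 j) ∧
  (∀ (i : Fin m), ∀ j ≤ J, c i.castSucc j + p i.succ ≤ c i.succ j) ∧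
  (∀ (i : Fin (m + 1)), ∀ j ≤ J, ∀ j' ≤ J,
      c i j ≠ c i j' → c i j + p i ≤ c i j' ∨ c i j' + p i ≤ c i j) ∧
  (∀ (i : Fin (m + 1)) (t : ℕ),
      (Finset.univ.filter (fun j => j ≤ J ∧ c i j = t)).card ≤ b i)

/-- `Gamma0 p i = { ∑_{i' ≤ i} λ_{i'}·p_{i'} | λ_{i'} ∈ {1,…,n+1} }` (release dates
are all `0`). -/
def Gamma0 {m : ℕ} (n : ℕ) (p : Fin (m + 1) → ℕ) (i : Fin (m + 1)) : Set ℕ :=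
  { x | ∃ lam : Fin (m + 1) → ℕ,
      (∀ i' ≤ i, 1 ≤ lam i' ∧ lam i' ≤ n + 1) ∧
      x = ∑ i' ∈ Finset.Iic i, lam i' * p i' }

/-- `c` is a permutation schedule for the sub-instance `I_J`: some permutation `σ`
maps `{0,…,J}` to itself and lists the jobs of `I_J` so that completion times are
nondecreasing along `σ` on every machine. -/
def PermUpTo {m n : ℕ} (J : Fin (n + 1)) (c : Fin (m + 1) → Fin (n + 1) → ℕ) : Prop :=
  ∃ σ : Equiv.Perm (Fin (n + 1)), (∀ j ≤ J, σ j ≤ J) ∧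
    ∀ i : Fin (m + 1), ∀ a a' : Fin (n + 1), a ≤ a' → a' ≤ J →
      c i (σ a) ≤ c i (σ a')

/-- Job `j` is on time in schedule `c` (due dates `d`). -/
abbrev OnTime {m n : ℕ} (d : Fin (n + 1) → ℕ) (c : Fin (m + 1) → Fin (n + 1) → ℕ)
    (j : Fin (n + 1)) : Prop :=
  c (Fin.last m) j ≤ d j

/-- `𝒮'(J,t,k)`: feasible permutation schedules for `I_J` such that (1) the on-time
jobs are ordered by their indices on every machine, (2) there is at least one on-time
job and, `js` being an on-time job with latest completion time, `c i js = t i` and the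
number of on-time jobs completing machine `i` at time `t i` is `k i`, and (3) the
schedule is Γ-active. -/
def SchedSet' {m n : ℕ} (p b : Fin (m + 1) → ℕ) (d : Fin (n + 1) → ℕ)
    (J : Fin (n + 1)) (t k : Fin (m + 1) → ℕ) :
    Set (Fin (m + 1) → Fin (n + 1) → ℕ) :=
  { c | Feasible0 p b J c ∧ PermUpTo J c ∧
      (∀ i : Fin (m + 1), ∀ a ≤ J, ∀ a' ≤ J, a ≤ a' →
        OnTime d c a → OnTime d c a' → c i a ≤ c i a') ∧
      (∃ js ≤ J, OnTime d c js ∧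
        (∀ j' ≤ J, OnTime d c j' → c (Fin.last m) j' ≤ c (Fin.last m) js) ∧
        ∀ i : Fin (m + 1), c i js = t i ∧
          (Finset.univ.filter
            (fun j' => j' ≤ J ∧ OnTime d c j' ∧ c i j' = t i)).card = k i) ∧
      (∀ i : Fin (m + 1), ∀ j ≤ J, c i j ∈ Gamma0 n p i) }

/-- `U_j(c) = 1` if job `j` is late in `c` and `0` otherwise. -/
noncomputable def lateU {m n : ℕ} (d : Fin (n + 1) → ℕ)
    (c : Fin (m + 1) → Fin (n + 1) → ℕ) (j : Fin (n + 1)) : ℝ :=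
  if d j < c (Fin.last m) j then 1 else 0

/-- The weighted number of late jobs of a schedule for `I_J`. -/
noncomputable def wLate {m n : ℕ} (d : Fin (n + 1) → ℕ) (w : Fin (n + 1) → ℝ)
    (J : Fin (n + 1)) (c : Fin (m + 1) → Fin (n + 1) → ℕ) : ℝ :=
  ∑ j ∈ Finset.Iic J, w j * lateU d c j

/-- The dynamic-programming value `w(J,t,k)`: the minimum (in `ℝ ∪ {+∞} = EReal`,
`+∞` if `𝒮'(J,t,k)` is empty) of the weighted number of late jobs over `𝒮'(J,t,k)`. -/
noncomputable def wFun {m n : ℕ} (p b : Fin (m + 1) → ℕ) (d : Fin (n + 1) → ℕ)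
    (w : Fin (n + 1) → ℝ) (J : Fin (n + 1)) (t k : Fin (m + 1) → ℕ) : EReal :=
  sInf { x : EReal | ∃ c ∈ SchedSet' p b d J t k, x = ((wLate d w J c : ℝ) : EReal) }

/-- `x(J,t,k) = ∑_{j' < J} w j'` if (i) all `k i = 1`, (ii) `t 0 ≥ p 0`, (iii)
`t (i+1) ≥ t i + p (i+1)` for consecutive machines and (iv) `t_m ≤ d J`;
otherwise `+∞`. -/
noncomputable def xval {m n : ℕ} (p : Fin (m + 1) → ℕ) (d : Fin (n + 1) → ℕ)
    (w : Fin (n + 1) → ℝ) (J : Fin (n + 1)) (t k : Fin (m + 1) → ℕ) : EReal :=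
  if (∀ i, k i = 1) ∧ p 0 ≤ t 0 ∧
      (∀ i : Fin m, t i.castSucc + p i.succ ≤ t i.succ) ∧ t (Fin.last m) ≤ d J
  then ((∑ j ∈ Finset.Iio J, w j : ℝ) : EReal) else ⊤

/-- the starting values of the late-jobs dynamic program: for the first
job (index `0`), `w(0,t,k) = x(0,t,k)`. -/
theorem stmt17 {m n : ℕ} (p b : Fin (m + 1) → ℕ) (d : Fin (n + 1) → ℕ)
    (w : Fin (n + 1) → ℝ) (hp : ∀ i, 1 ≤ p i) (hb : ∀ i, 1 ≤ b i ∧ b i ≤ n + 1)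
    (hd : Monotone d) (hw : ∀ j, 0 ≤ w j) (t k : Fin (m + 1) → ℕ)
    (ht : ∀ i, t i ∈ Gamma0 n p i) (hk : ∀ i, 1 ≤ k i ∧ k i ≤ b i) :
    wFun p b d w 0 t k = xval p d w 0 t k := by
  have hle0 : ∀ j : Fin (n + 1), j ≤ 0 ↔ j = 0 := fun j => Fin.le_zero_iff
  have hIic : Finset.Iic (0 : Fin (n + 1)) = {0} := by
    ext j; simp [hle0 j]
  by_cases H : (∀ i, k i = 1) ∧ p 0 ≤ t 0 ∧
      (∀ i : Fin m, t i.castSucc + p i.succ ≤ t i.succ) ∧ t (Fin.last m) ≤ d 0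
  · obtain ⟨hk1, ht0, htc, htd⟩ := H
    have hset : { x : EReal | ∃ c ∈ SchedSet' p b d 0 t k,
        x = ((wLate d w 0 c : ℝ) : EReal) } = {((0:ℝ) : EReal)} := by
      ext x
      simp only [Set.mem_setOf_eq, Set.mem_singleton_iff]
      constructor
      · rintro ⟨c, hc, rfl⟩
        obtain ⟨js, hjs0, hon, -, -⟩ := hc.2.2.2.1
        have hjs : js = 0 := (hle0 js).mp hjs0
        subst hjs
        have hlate : lateU d c 0 = 0 := by
          simp only [lateU, if_neg (not_lt.mpr hon)]
        have : wLate d w 0 c = 0 := by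
          simp [wLate, hIic, hlate]
        rw [this]
      · rintro rfl
        refine ⟨fun i _ => t i, ⟨⟨?_, ?_, ?_, ?_⟩, ?_, ?_, ?_, ?_⟩, ?_⟩
        · intro j _; exact ht0
        · intro i j _; exact htc i
        · intro i j _ j' _ h; exact absurd rfl h
        · intro i s
          calc (Finset.univ.filter (fun j : Fin (n+1) => j ≤ 0 ∧ t i = s)).card
              ≤ ({0} : Finset (Fin (n+1))).card := by
                apply Finset.card_le_card
                intro j hj
                simp only [Finset.mem_filter] at hj
                simp [(hle0 j).mp hj.2.1]
            _ = 1 := Finset.card_singleton _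
            _ ≤ b i := (hb i).1
        · exact ⟨Equiv.refl _, fun j hj => hj, fun i a a' _ _ => le_refl _⟩
        · intro i a _ a' _ _ _ _; exact le_refl _
        · refine ⟨0, le_refl _, htd, fun j' _ _ => le_refl _, fun i => ⟨rfl, ?_⟩⟩
          rw [hk1 i]
          have : (Finset.univ.filter
              (fun j' : Fin (n+1) => j' ≤ 0 ∧ OnTime d (fun i _ => t i) j' ∧ t i = t i))
              = {0} := by
            ext j'
            simp only [Finset.mem_filter, Finset.mem_singleton, Finset.mem_univ, true_and]
            constructor
            · rintro ⟨h1, -⟩; exact (hle0 j').mp h1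
            · rintro rfl; exact ⟨le_refl _, htd, trivial⟩
          rw [this, Finset.card_singleton]
        · intro i j _; exact ht i
        · have : wLate d w 0 (fun i _ => t i) = 0 := by
            have hlate : lateU d (fun i (_ : Fin (n+1)) => t i) 0 = 0 := by
              simp only [lateU, if_neg (not_lt.mpr htd)]
            simp [wLate, hIic, hlate]
          rw [this]
    rw [wFun, hset, sInf_singleton, xval, if_pos ⟨hk1, ht0, htc, htd⟩]
    have : (∑ j ∈ Finset.Iio (0 : Fin (n+1)), w j) = 0 := by
      have : Finset.Iio (0 : Fin (n + 1)) = ∅ := by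
        ext j; simp [Fin.pos_iff_ne_zero]
      simp [this]
    rw [this]
  · have hempty : { x : EReal | ∃ c ∈ SchedSet' p b d 0 t k,
        x = ((wLate d w 0 c : ℝ) : EReal) } = ∅ := by
      rw [Set.eq_empty_iff_forall_notMem]
      rintro x ⟨c, hc, rfl⟩
      obtain ⟨js, hjs0, hon, -, hti⟩ := hc.2.2.2.1
      have hjs : js = 0 := (hle0 js).mp hjs0
      subst hjs
      apply H
      have hc0 : ∀ i, c i 0 = t i := fun i => (hti i).1
      refine ⟨?_, ?_, ?_, ?_⟩
      · intro i
        rw [← (hti i).2]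
        have : (Finset.univ.filter
            (fun j' : Fin (n+1) => j' ≤ 0 ∧ OnTime d c j' ∧ c i j' = t i)) = {0} := by
          ext j'
          simp only [Finset.mem_filter, Finset.mem_singleton, Finset.mem_univ, true_and]
          constructor
          · rintro ⟨h1, -⟩; exact (hle0 j').mp h1
          · rintro rfl; exact ⟨le_refl _, hon, hc0 i⟩
        rw [this, Finset.card_singleton]
      · rw [← hc0 0]; exact hc.1.1 0 (le_refl _)
      · intro i
        rw [← hc0 i.castSucc, ← hc0 i.succ]
        exact hc.1.2.1 i 0 (le_refl _)
      · rw [← hc0 (Fin.last m)]; exact hon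
    rw [wFun, hempty, sInf_empty, xval, if_neg H]
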